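/- arXiv:1905.04106 — 6 statements merged into one kernel-verified Lean document; each statement's English description precedes it below -/
import Mathlib

section
/- Every maximal independent set in a complete bipartite graph is robust: if M is a maximal independent set of the complete bipartite graph K_{V1,V2} (with V1, V2 nonempty), then M is a maximal independent set of every connected spanning subgraph. -/
open SimpleGraph

variable {V : Type*}

/-- `S` is an independent set in `G`: no two vertices of `S` are adjacent. -/
def Indep (G : SimpleGraph V) (S : Set V) : Prop :=
  ∀ u ∈ S, ∀ v ∈ S, ¬ G.Adj u v

/-- `M` is a maximal independent set of `G` (maximal for inclusion). -/
def IsMIS (G : SimpleGraph V) (M : Set V) : Prop :=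
  Indep G M ∧ ∀ S : Set V, Indep G S → M ⊆ S → S = M

/-- `M` is robust in `G`: it is a maximal independent set of every
connected spanning subgraph of `G`. -/
def RobustMIS (G : SimpleGraph V) (M : Set V) : Prop :=
  ∀ H : SimpleGraph V, H ≤ G → H.Connected → IsMIS H M

/-- A pendant vertex: a vertex with exactly one neighbor. -/
def Pendant (G : SimpleGraph V) (v : V) : Prop :=
  ∃! w, G.Adj v w

/-- `v` lies on a cycle of `G`. -/
def OnCycle (G : SimpleGraph V) (v : V) : Prop :=
  ∃ p : G.Walk v v, p.IsCycle

/-- `v` has at least one pendant neighbor. -/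
def HasPendantNeighbor (G : SimpleGraph V) (v : V) : Prop :=
  ∃ w, G.Adj v w ∧ Pendant G w

/-- A sputnik graph: every vertex on a cycle has a pendant neighbor. -/
def Sputnik (G : SimpleGraph V) : Prop :=
  ∀ v, OnCycle G v → HasPendantNeighbor G v

/-- `G` is a complete bipartite graph with parts `V1`, `V2`. -/
def IsCompleteBipartiteWith (G : SimpleGraph V) (V1 V2 : Set V) : Prop :=
  (∀ v, v ∈ V1 ↔ v ∉ V2) ∧
    (∀ u v, G.Adj u v ↔ ((u ∈ V1 ∧ v ∈ V2) ∨ (u ∈ V2 ∧ v ∈ V1)))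

/-- `G` is a complete bipartite graph. -/
def IsCompleteBipartite (G : SimpleGraph V) : Prop :=
  ∃ V1 V2 : Set V, IsCompleteBipartiteWith G V1 V2

/-- `G` is biconnected: at least three vertices, and removing any
single vertex leaves it connected. -/
def Biconnected (G : SimpleGraph V) : Prop :=
  3 ≤ Nat.card V ∧ ∀ w : V, (G.induce {v | v ≠ w}).Connected

theorem Indep.mono {G H : SimpleGraph V} {S : Set V} (hHG : H ≤ G) (hS : Indep G S) :
    Indep H S :=
  fun u hu v hv huv => hS u hu v hv (hHG huv)

theorem isMIS_iff_indep_and_forall_exists_adj (G : SimpleGraph V) (M : Set V) :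
    IsMIS G M ↔ Indep G M ∧ ∀ v ∉ M, ∃ u ∈ M, G.Adj v u := by
  refine ⟨fun ⟨hM, hmax⟩ => ⟨hM, fun v hv => ?_⟩, fun ⟨hM, hdom⟩ => ⟨hM, fun S hS hMS => ?_⟩⟩
  · by_contra! hnadj
    have hind : Indep G (insert v M) := by
      rintro a (rfl | ha) b (rfl | hb) hab
      · exact G.irrefl hab
      · exact hnadj b hb hab
      · exact hnadj a ha hab.symm
      · exact hM a ha b hb hab
    exact hv (hmax _ hind (Set.subset_insert v M) ▸ Set.mem_insert v M)
  · refine (Set.Subset.antisymm hMS fun v hvS => ?_).symm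
    by_contra hv
    obtain ⟨u, huM, hvu⟩ := hdom v hv
    exact hS v hvS u (hMS huM) hvu

/-- Every edge of `G` joins `M` to its complement, so in a connected spanning subgraph any edge at
a vertex outside `M` lands in `M`. -/
theorem robustMIS_of_indep_compl {G : SimpleGraph V} {M : Set V} (hM : IsMIS G M)
    (hMc : Indep G Mᶜ) : RobustMIS G M := by
  rw [isMIS_iff_indep_and_forall_exists_adj] at hM
  intro H hHG hH
  refine (isMIS_iff_indep_and_forall_exists_adj H M).2 ⟨hM.1.mono hHG, fun v hv => ?_⟩
  obtain ⟨u, -, hvu⟩ := hM.2 v hv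
  have : Nontrivial V := ⟨⟨v, u, hvu.ne⟩⟩
  obtain ⟨w, hvw⟩ := hH.preconnected.exists_adj_of_nontrivial v
  refine ⟨w, ?_, hvw⟩
  by_contra hwM
  exact hMc v hv w hwM (hHG hvw)

namespace IsCompleteBipartiteWith

variable {G : SimpleGraph V} {V1 V2 : Set V}

theorem adj_of_adj_of_adj_of_adj (hG : IsCompleteBipartiteWith G V1 V2) {a b c d : V}
    (hab : G.Adj a b) (hbc : G.Adj b c) (hcd : G.Adj c d) : G.Adj a d := by
  obtain ⟨hpart, hadj⟩ := hG
  rw [hadj] at hab hbc hcd ⊢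
  have := hpart a; have := hpart b; have := hpart c; have := hpart d
  tauto

/-- Two vertices outside `M` that were adjacent would be joined through their neighbours in `M`
by a path of length three, whose ends would then be adjacent. -/
theorem indep_compl_of_isMIS (hG : IsCompleteBipartiteWith G V1 V2) {M : Set V}
    (hM : IsMIS G M) : Indep G Mᶜ := by
  rw [isMIS_iff_indep_and_forall_exists_adj] at hM
  intro u hu v hv huv
  obtain ⟨m, hm, hum⟩ := hM.2 u hu
  obtain ⟨m', hm', hvm'⟩ := hM.2 v hv
  exact hM.1 m hm m' hm' (hG.adj_of_adj_of_adj_of_adj hum.symm huv hvm')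

end IsCompleteBipartiteWith

theorem stmt_2_general (G : SimpleGraph V) (V1 V2 : Set V)
    (hG : IsCompleteBipartiteWith G V1 V2)
    (M : Set V) (hM : IsMIS G M) : RobustMIS G M :=
  robustMIS_of_indep_compl hM (hG.indep_compl_of_isMIS hM)

theorem stmt_2 (G : SimpleGraph V) (V1 V2 : Set V)
    (hG : IsCompleteBipartiteWith G V1 V2) (h1 : V1.Nonempty) (h2 : V2.Nonempty)
    (M : Set V) (hM : IsMIS G M) : RobustMIS G M :=
  stmt_2_general G V1 V2 hG M hM
end

section
/- If G is a connected graph such that every maximal independent set of G is robust, and G is not a sputnik, then G is a complete bipartite graph. -/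
open SimpleGraph

variable {V : Type*}

/-
Fix a vertex `x` on a cycle with no pendant neighbour. Robustness is used through one
observation: if an MIS `M` omits `x`, and from every vertex `v ≠ x` some neighbour of `x` outside
`M` is reachable in `G - x`, then removing the edges between `x` and `M` leaves a connected
spanning subgraph in which `M ∪ {x}` is independent, which is impossible. Because no neighbour of
`x` is pendant, such an `M` can be built around any independent set `S` that lies in one component
of `G - x`, contains a neighbour of `x`, and has a neighbour of `x` adjacent to it. Consequently
any two neighbours `p, q` of `x` in a common component of `G - x` satisfy `N(q) ⊆ N(p)`. Applied at
`x`, then at a neighbour `y` of `x` on the cycle, and once more at `x`, this shows that every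
neighbour of `x` has neighbourhood `N(y)` and every neighbour of `y` has neighbourhood `N(x)`. By
connectivity, `G` is then complete bipartite with parts `N(y)` and `N(x)`.
-/

variable {G : SimpleGraph V} {x : V}

lemma exists_isMIS_superset {S : Set V} (hS : Indep G S) : ∃ M, IsMIS G M ∧ S ⊆ M := by
  have hchain : ∀ c ⊆ {T : Set V | Indep G T}, IsChain (· ⊆ ·) c → c.Nonempty →
      ∃ ub ∈ {T : Set V | Indep G T}, ∀ s ∈ c, s ⊆ ub := by
    refine fun c hc hchain _ => ⟨⋃₀ c, ?_, fun s hs => Set.subset_sUnion_of_mem hs⟩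
    rintro u ⟨T₁, hT₁, hu⟩ v ⟨T₂, hT₂, hv⟩
    rcases hchain.total hT₁ hT₂ with h | h
    · exact hc hT₂ u (h hu) v hv
    · exact hc hT₁ u hu v (h hv)
  obtain ⟨M, hSM, hM⟩ := zorn_subset_nonempty _ hchain S hS
  exact ⟨M, ⟨hM.1, fun T hT hMT => (hM.2 hT hMT).antisymm hMT⟩, hSM⟩

lemma exists_adj_ne_of_not_hasPendantNeighbor (hx : ¬HasPendantNeighbor G x) {a : V}
    (ha : G.Adj x a) : ∃ t, G.Adj a t ∧ t ≠ x := by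
  by_contra! h
  exact hx ⟨a, ha, x, ha.symm, h⟩

lemma eq_of_reachable_deleteIncidenceSet {v : V} (h : (G.deleteIncidenceSet x).Reachable x v) :
    v = x := by
  obtain ⟨w⟩ := h
  cases w with
  | nil => rfl
  | cons h _ => exact absurd rfl (deleteIncidenceSet_adj.1 h).2.1

lemma SimpleGraph.Walk.reachable_deleteIncidenceSet {u v : V} (w : G.Walk u v)
    (hx : x ∉ w.support) : (G.deleteIncidenceSet x).Reachable u v := by
  induction w with
  | nil => rfl
  | @cons a b _ hab w ih =>
    simp only [Walk.support_cons, List.mem_cons, not_or] at hx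
    have hb : b ≠ x := fun hb => hx.2 (hb ▸ w.start_mem_support)
    exact (deleteIncidenceSet_adj.2 ⟨hab, Ne.symm hx.1, hb⟩).reachable.trans (ih hx.2)

lemma SimpleGraph.Walk.exists_adj_reachable_deleteIncidenceSet {v : V} (w : G.Walk v x)
    (hv : v ≠ x) : ∃ a, G.Adj x a ∧ (G.deleteIncidenceSet x).Reachable v a := by
  induction w with
  | nil => exact absurd rfl hv
  | @cons u b y hub _ ih =>
    by_cases hb : b = y
    · subst hb
      exact ⟨u, hub.symm, .rfl⟩
    · obtain ⟨a, hxa, hba⟩ := ih hb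
      exact ⟨a, hxa, (deleteIncidenceSet_adj.2 ⟨hub, hv, hb⟩).reachable.trans hba⟩

lemma OnCycle.exists_adj_adj_reachable (h : OnCycle G x) :
    ∃ y z, G.Adj x y ∧ G.Adj x z ∧ y ≠ z ∧ (G.deleteIncidenceSet x).Reachable y z := by
  obtain ⟨c, hc⟩ := h
  cases c with
  | nil => exact absurd hc Walk.not_isCycle_nil
  | @cons _ y _ hxy q =>
    have hq := ((Walk.cons_isCycle_iff q hxy).1 hc).1.reverse
    have hlen : 2 ≤ q.reverse.length := by
      have := hc.three_le_length
      simp only [Walk.length_cons, Walk.length_reverse] at this ⊢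
      omega
    generalize q.reverse = r at hq hlen
    cases r with
    | nil => simp at hlen
    | @cons _ z _ hxz r =>
      rw [Walk.cons_isPath_iff] at hq
      refine ⟨y, z, hxy, hxz, ?_, (r.reachable_deleteIncidenceSet hq.2).symm⟩
      rintro rfl
      simp [(Walk.isPath_iff_nil.1 hq.1).eq_nil] at hlen

lemma RobustMIS.mem_of_forall_reachable {M : Set V} (hM : RobustMIS G M)
    (h : ∀ v, v ≠ x → ∃ a, G.Adj x a ∧ a ∉ M ∧ (G.deleteIncidenceSet x).Reachable v a) :
    x ∈ M := by
  set H := G.deleteEdges {e | ∃ m ∈ M, e = s(x, m)}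
  have hH_adj : ∀ {u v}, H.Adj u v ↔ G.Adj u v ∧ ¬(u = x ∧ v ∈ M) ∧ ¬(v = x ∧ u ∈ M) := by
    intro u v
    simp only [H, deleteEdges_adj, Set.mem_ofPred_eq, Sym2.eq_iff]
    grind
  have hreach : ∀ v, H.Reachable v x := by
    intro v
    by_cases hv : v = x
    · rw [hv]
    obtain ⟨a, hxa, haM, hva⟩ := h v hv
    refine (hva.mono fun u w huw => ?_).trans (hH_adj.2 ⟨hxa.symm, ?_, ?_⟩).reachable
    · obtain ⟨huw, hu, hw⟩ := deleteIncidenceSet_adj.1 huw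
      exact hH_adj.2 ⟨huw, fun h => hu h.1, fun h => hw h.1⟩
    · exact fun h => hxa.ne' h.1
    · exact fun h => haM h.2
  obtain ⟨hMind, hMmax⟩ := hM H (G.deleteEdges_le _)
    ((connected_iff_exists_forall_reachable H).2 ⟨x, fun v => (hreach v).symm⟩)
  have hind : Indep H (insert x M) := by
    rintro u (rfl | hu) v (rfl | hv) huv
    · exact H.loopless.irrefl _ huv
    · exact (hH_adj.1 huv).2.1 ⟨rfl, hv⟩
    · exact (hH_adj.1 huv).2.2 ⟨rfl, hu⟩
    · exact hMind u hu v hv huv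
  exact hMmax _ hind (Set.subset_insert x M) ▸ Set.mem_insert x M

lemma exists_isMIS_superset_omitting_neighbor (hx : ¬HasPendantNeighbor G x) {S : Set V}
    (hS : Indep G S) (hxS : x ∉ S) {K : (G.deleteIncidenceSet x).ConnectedComponent}
    (hSK : ∀ s ∈ S, (G.deleteIncidenceSet x).connectedComponentMk s = K) :
    ∃ M, IsMIS G M ∧ S ⊆ M ∧ ∀ a, G.Adj x a →
      (G.deleteIncidenceSet x).connectedComponentMk a ≠ K →
      ∃ b, G.Adj x b ∧ b ∉ M ∧ (G.deleteIncidenceSet x).Reachable a b := by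
  set κ := (G.deleteIncidenceSet x).connectedComponentMk
  have hκ_adj : ∀ {u v}, G.Adj u v → u ≠ x → v ≠ x → κ u = κ v := fun huv hu hv =>
    ConnectedComponent.connectedComponentMk_eq_of_adj (deleteIncidenceSet_adj.2 ⟨huv, hu, hv⟩)
  have hedge : ∀ c, (∃ a, G.Adj x a ∧ κ a = c) →
      ∃ b t, G.Adj x b ∧ G.Adj b t ∧ t ≠ x ∧ κ b = c ∧ κ t = c := by
    rintro _ ⟨a, hxa, rfl⟩
    obtain ⟨t, hat, htx⟩ := exists_adj_ne_of_not_hasPendantNeighbor hx hxa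
    exact ⟨a, t, hxa, hat, htx, rfl, (hκ_adj hat hxa.ne' htx).symm⟩
  have : Nonempty V := ⟨x⟩
  choose! b t hxb hbt htx hb ht using hedge
  -- one vertex `t c` in each component `c ≠ K` meeting `N(x)`; it keeps `b c` out of `M`
  set C := {c | c ≠ K ∧ ∃ a, G.Adj x a ∧ κ a = c}
  have hind : Indep G (S ∪ t '' C) := by
    have hne : ∀ w ∈ S ∪ t '' C, w ≠ x := by
      rintro w (hw | ⟨c, hc, rfl⟩)
      · exact fun h => hxS (h ▸ hw)
      · exact htx c hc.2
    rintro u hu v hv huv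
    have hκuv := hκ_adj huv (hne u hu) (hne v hv)
    rcases hu with hu | ⟨c, hc, rfl⟩ <;> rcases hv with hv | ⟨d, hd, rfl⟩
    · exact hS u hu v hv huv
    · exact hd.1 (by rw [← ht d hd.2, ← hκuv, hSK u hu])
    · exact hc.1 (by rw [← ht c hc.2, hκuv, hSK v hv])
    · rw [ht c hc.2, ht d hd.2] at hκuv
      subst hκuv
      exact G.loopless.irrefl _ huv
  obtain ⟨M, hM, hSM⟩ := exists_isMIS_superset hind
  refine ⟨M, hM, Set.subset_union_left.trans hSM, fun a hxa haK => ?_⟩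
  have hc : κ a ∈ C := ⟨haK, a, hxa, rfl⟩
  exact ⟨b _, hxb _ hc.2, fun hbM => hM.1 _ hbM _ (hSM (Or.inr ⟨_, hc, rfl⟩)) (hbt _ hc.2),
    ConnectedComponent.exact (hb _ hc.2).symm⟩

theorem not_adj_of_indep_of_reachable (hconn : G.Connected)
    (hrob : ∀ M : Set V, IsMIS G M → RobustMIS G M) (hx : ¬HasPendantNeighbor G x)
    {S : Set V} (hS : Indep G S) {p q s : V} (hxp : G.Adj x p) (hpS : p ∈ S)
    (hSp : ∀ u ∈ S, (G.deleteIncidenceSet x).Reachable p u) (hxq : G.Adj x q) (hsS : s ∈ S) :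
    ¬G.Adj q s := by
  intro hqs
  have hxS : x ∉ S := fun h => hxp.ne (eq_of_reachable_deleteIncidenceSet (hSp x h).symm).symm
  obtain ⟨M, hM, hSM, hother⟩ := exists_isMIS_superset_omitting_neighbor hx hS hxS
    (K := (G.deleteIncidenceSet x).connectedComponentMk p)
    fun u hu => (ConnectedComponent.sound (hSp u hu)).symm
  have hxM : x ∉ M := fun h => hM.1 x h p (hSM hpS) hxp
  have hqM : q ∉ M := fun h => hM.1 q h s (hSM hsS) hqs
  refine hxM ((hrob M hM).mem_of_forall_reachable fun v hv => ?_)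
  obtain ⟨w⟩ := hconn.preconnected v x
  obtain ⟨a, hxa, hva⟩ := w.exists_adj_reachable_deleteIncidenceSet hv
  by_cases haK : (G.deleteIncidenceSet x).connectedComponentMk a =
      (G.deleteIncidenceSet x).connectedComponentMk p
  · have hsq : (G.deleteIncidenceSet x).Adj s q :=
      deleteIncidenceSet_adj.2 ⟨hqs.symm, fun h => hxS (h ▸ hsS), hxq.ne'⟩
    exact ⟨q, hxq, hqM,
      hva.trans ((ConnectedComponent.exact haK).trans ((hSp s hsS).trans hsq.reachable))⟩
  · obtain ⟨b, hxb, hbM, hab⟩ := hother a hxa haK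
    exact ⟨b, hxb, hbM, hva.trans hab⟩

theorem neighborSet_subset_of_reachable (hconn : G.Connected)
    (hrob : ∀ M : Set V, IsMIS G M → RobustMIS G M) (hx : ¬HasPendantNeighbor G x) {p q : V}
    (hxp : G.Adj x p) (hxq : G.Adj x q) (hpq : (G.deleteIncidenceSet x).Reachable p q) :
    G.neighborSet q ⊆ G.neighborSet p := by
  intro s hqs
  rw [mem_neighborSet] at hqs ⊢
  by_cases hsx : s = x
  · exact hsx ▸ hxp.symm
  by_contra hps
  have hS : Indep G {p, s} := by
    rintro u (rfl | rfl) v (rfl | rfl) huv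
    · exact G.loopless.irrefl _ huv
    · exact hps huv
    · exact hps huv.symm
    · exact G.loopless.irrefl _ huv
  refine not_adj_of_indep_of_reachable hconn hrob hx hS hxp (Set.mem_insert p {s}) ?_ hxq
    (Set.mem_insert_of_mem p rfl) hqs
  rintro u (rfl | rfl)
  · rfl
  · exact hpq.trans (deleteIncidenceSet_adj.2 ⟨hqs, hxq.ne', hsx⟩).reachable

theorem neighborSet_eq_of_neighborSet_subset (hconn : G.Connected)
    (hrob : ∀ M : Set V, IsMIS G M → RobustMIS G M) {y z : V} (hyz : y ≠ z)
    (hN : G.neighborSet y ⊆ G.neighborSet z) {a b : V} (ha : G.Adj y a) (hb : G.Adj y b) :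
    G.neighborSet a = G.neighborSet b := by
  have hy : ¬HasPendantNeighbor G y := by
    rintro ⟨w, hyw, hw⟩
    exact hyz (hw.unique hyw.symm (hN hyw).symm)
  have hreach : ∀ a, G.Adj y a → (G.deleteIncidenceSet y).Reachable a z := fun a ha =>
    (deleteIncidenceSet_adj.2 ⟨(hN ha).symm, ha.ne', hyz.symm⟩).reachable
  exact (neighborSet_subset_of_reachable hconn hrob hy hb ha
      ((hreach b hb).trans (hreach a ha).symm)).antisymm
    (neighborSet_subset_of_reachable hconn hrob hy ha hb ((hreach a ha).trans (hreach b hb).symm))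

theorem isCompleteBipartiteWith_neighborSet (hconn : G.Connected) {y : V} (hxy : G.Adj x y)
    (hx : ∀ a, G.Adj x a → G.neighborSet a = G.neighborSet y)
    (hy : ∀ b, G.Adj y b → G.neighborSet b = G.neighborSet x) :
    IsCompleteBipartiteWith G (G.neighborSet y) (G.neighborSet x) := by
  have hxN : ∀ a, G.Adj x a → ∀ v, G.Adj a v ↔ G.Adj y v := fun a ha =>
    Set.ext_iff.1 (hx a ha)
  have hyN : ∀ b, G.Adj y b → ∀ v, G.Adj b v ↔ G.Adj x v := fun b hb =>
    Set.ext_iff.1 (hy b hb)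
  have hcover : ∀ v, G.Adj x v ∨ G.Adj y v := by
    intro v
    by_contra hv
    obtain ⟨w⟩ := hconn.preconnected x v
    obtain ⟨d, -, hd, hd'⟩ := w.exists_boundary_dart {u | G.Adj x u ∨ G.Adj y u}
      (Or.inr hxy.symm) hv
    rcases hd with hd | hd
    · exact hd' (Or.inr ((hxN _ hd _).1 d.adj))
    · exact hd' (Or.inl ((hyN _ hd _).1 d.adj))
  have hdisj : ∀ v, G.Adj x v → ¬G.Adj y v := fun v hxv hyv =>
    G.loopless.irrefl y ((hxN v hxv y).1 hyv.symm)
  refine ⟨fun v => ⟨fun hyv hxv => hdisj v hxv hyv, (hcover v).resolve_left⟩, fun u v => ?_⟩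
  simp only [mem_neighborSet]
  constructor
  · intro huv
    rcases hcover u with hxu | hyu
    · exact Or.inr ⟨hxu, (hxN u hxu v).1 huv⟩
    · exact Or.inl ⟨hyu, (hyN u hyu v).1 huv⟩
  · rintro (⟨hyu, hxv⟩ | ⟨hxu, hyv⟩)
    · exact ((hxN v hxv u).2 hyu).symm
    · exact (hxN u hxu v).2 hyv

theorem stmt_7 (G : SimpleGraph V) (hconn : G.Connected)
    (hrob : ∀ M : Set V, IsMIS G M → RobustMIS G M)
    (hns : ¬ Sputnik G) : IsCompleteBipartite G := by
  obtain ⟨x, hxc, hx⟩ : ∃ x, OnCycle G x ∧ ¬HasPendantNeighbor G x := by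
    simpa [Sputnik] using hns
  obtain ⟨y, z, hxy, hxz, hyz, hyz_reach⟩ := hxc.exists_adj_adj_reachable
  have hNyz : G.neighborSet y ⊆ G.neighborSet z :=
    neighborSet_subset_of_reachable hconn hrob hx hxz hxy hyz_reach.symm
  obtain ⟨t, hyt, htx⟩ := exists_adj_ne_of_not_hasPendantNeighbor hx hxy
  have hNxt : G.neighborSet x = G.neighborSet t :=
    neighborSet_eq_of_neighborSet_subset hconn hrob hyz hNyz hxy.symm hyt
  exact ⟨_, _, isCompleteBipartiteWith_neighborSet hconn hxy
    (fun a ha => neighborSet_eq_of_neighborSet_subset hconn hrob htx.symm hNxt.le ha hxy)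
    (fun b hb => neighborSet_eq_of_neighborSet_subset hconn hrob hyz hNyz hb hxy.symm)⟩
end

section
/- Every connected bipartite graph admits a robust maximal independent set; specifically, one side of the bipartition is a maximal independent set in every connected spanning subgraph. -/
open SimpleGraph

variable {V : Type*}

/-!
Take a nonempty side `M` of the bipartition. Edges only join the two sides, so `M` is independent
in every subgraph. In a connected spanning subgraph, a vertex outside `M` has a path to `M` whose
first edge already lands in `M`; hence `M` is also dominating, and therefore maximal.
-/

namespace SimpleGraph

variable {G H : SimpleGraph V} {s t : Set V}

theorem IsBipartiteWith.of_le (h : G.IsBipartiteWith s t) (hHG : H ≤ G) :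
    H.IsBipartiteWith s t :=
  ⟨h.disjoint, fun _ _ hadj => h.mem_of_adj (hHG hadj)⟩

theorem IsBipartiteWith.indep (h : G.IsBipartiteWith s t) : Indep G s :=
  fun _ hu _ hv hadj => Set.disjoint_left.1 h.disjoint hv (h.mem_of_mem_adj hu hadj)

theorem Connected.exists_adj_mem_of_isBipartiteWith (hconn : G.Connected)
    (h : G.IsBipartiteWith s t) (hs : s.Nonempty) {v : V} (hv : v ∈ t) :
    ∃ w ∈ s, G.Adj v w := by
  obtain ⟨m, hm⟩ := hs
  have hvm : v ≠ m := fun hvm => Set.disjoint_left.1 h.disjoint hm (hvm ▸ hv)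
  obtain ⟨p⟩ := hconn.preconnected v m
  have hadj := p.adj_snd (p.not_nil_of_ne hvm)
  exact ⟨_, h.symm.mem_of_mem_adj hv hadj, hadj⟩

theorem Connected.isMIS_of_isBipartiteWith (hconn : G.Connected) (h : G.IsBipartiteWith s t)
    (hst : sᶜ ⊆ t) (hs : s.Nonempty) : IsMIS G s := by
  refine ⟨h.indep, fun S hS hsS => Set.Subset.antisymm (fun x hxS => ?_) hsS⟩
  by_contra hxs
  obtain ⟨w, hws, hxw⟩ := hconn.exists_adj_mem_of_isBipartiteWith h hs (hst hxs)
  exact hS x hxS w (hsS hws) hxw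

theorem IsBipartiteWith.robustMIS (h : G.IsBipartiteWith s t) (hst : sᶜ ⊆ t)
    (hs : s.Nonempty) : RobustMIS G s :=
  fun _ hHG hconn => hconn.isMIS_of_isBipartiteWith (h.of_le hHG) hst hs

end SimpleGraph

theorem stmt_9 (G : SimpleGraph V) (hconn : G.Connected) (V1 V2 : Set V)
    (hpart : ∀ v, v ∈ V1 ↔ v ∉ V2)
    (hbip : ∀ u v, G.Adj u v → ((u ∈ V1 ∧ v ∈ V2) ∨ (u ∈ V2 ∧ v ∈ V1))) :
    ∃ M : Set V, (M = V1 ∨ M = V2) ∧ IsMIS G M ∧ RobustMIS G M := by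
  have hG : G.IsBipartiteWith V1 V2 :=
    ⟨Set.disjoint_left.2 fun v => (hpart v).1, fun u v => hbip u v⟩
  have hcompl₁ : V1ᶜ ⊆ V2 := fun _ hx => not_not.1 (mt (hpart _).2 hx)
  have hcompl₂ : V2ᶜ ⊆ V1 := fun _ hx => (hpart _).2 hx
  obtain ⟨v⟩ := hconn.nonempty
  by_cases hv : v ∈ V1
  · have hrobust := hG.robustMIS hcompl₁ ⟨v, hv⟩
    exact ⟨V1, Or.inl rfl, hrobust G le_rfl hconn, hrobust⟩
  · have hrobust := hG.symm.robustMIS hcompl₂ ⟨v, hcompl₁ hv⟩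
    exact ⟨V2, Or.inr rfl, hrobust G le_rfl hconn, hrobust⟩
end

section
/- A biconnected graph that is not bipartite admits no robust maximal independent set. -/
/-!
If `M` is independent and every edge met `M`, then `M` and its complement would 2-colour `G`;
so a non-bipartite `G` has an edge `uv` avoiding `M`. Deleting every edge at `v` except `uv`
keeps the graph connected, because `G - v` is connected, and makes `v` a pendant vertex whose
only neighbour `u` lies outside `M`. Then `M ∪ {v}` is still independent, so `M` is not maximal
in this connected spanning subgraph.
-/

open SimpleGraph

variable {V : Type*}

theorem Indep.exists_adj_of_not_colorable_two {G : SimpleGraph V} {M : Set V} (hM : Indep G M)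
    (hnb : ¬ G.Colorable 2) : ∃ u v, G.Adj u v ∧ u ∉ M ∧ v ∉ M := by
  classical
  by_contra! hcover
  refine hnb ⟨Coloring.mk (fun x => if x ∈ M then (0 : Fin 2) else 1) fun {a b} hab => ?_⟩
  by_cases ha : a ∈ M
  · have hb : b ∉ M := fun hb => hM a ha b hb hab
    simp [ha, hb]
  · simp [ha, hcover a b hab ha]

theorem IsMIS.exists_adj_mem {G : SimpleGraph V} {M : Set V} (hM : IsMIS G M) {v : V}
    (hv : v ∉ M) : ∃ w ∈ M, G.Adj v w := by
  by_contra! hfree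
  have hindep : Indep G (insert v M) := by
    rintro a (rfl | ha) b (rfl | hb) hab
    · exact G.loopless.irrefl _ hab
    · exact hfree b hb hab
    · exact hfree a ha hab.symm
    · exact hM.1 a ha b hb hab
  exact hv (hM.2 _ hindep (Set.subset_insert v M) ▸ Set.mem_insert v M)

namespace SimpleGraph

def pruneAt (G : SimpleGraph V) (v u : V) : SimpleGraph V :=
  G.deleteEdges {e | v ∈ e ∧ e ≠ s(v, u)}

variable {G : SimpleGraph V} {u v : V}

theorem pruneAt_le : G.pruneAt v u ≤ G :=
  deleteEdges_le _

theorem pruneAt_adj_left {w : V} : (G.pruneAt v u).Adj v w ↔ G.Adj v w ∧ w = u := by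
  simp only [pruneAt, deleteEdges_adj, Set.mem_ofPred_eq, Sym2.mem_mk_left, true_and, not_not,
    Sym2.congr_right]

theorem pruneAt_adj_of_ne {a b : V} (ha : a ≠ v) (hb : b ≠ v) :
    (G.pruneAt v u).Adj a b ↔ G.Adj a b := by
  simp [pruneAt, ha.symm, hb.symm]

theorem pruneAt_connected (huv : G.Adj v u) (hconn : (G.induce {x | x ≠ v}).Connected) :
    (G.pruneAt v u).Connected := by
  have hvu : (G.pruneAt v u).Adj v u := pruneAt_adj_left.2 ⟨huv, rfl⟩
  let ι : G.induce {x | x ≠ v} →g G.pruneAt v u :=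
    ⟨Subtype.val, fun {x y} hxy => (pruneAt_adj_of_ne x.2 y.2).2 hxy⟩
  have hreach_u : ∀ a, (G.pruneAt v u).Reachable a u := by
    intro a
    by_cases ha : a = v
    · exact ha ▸ hvu.reachable
    · exact (hconn.preconnected ⟨a, ha⟩ ⟨u, huv.ne.symm⟩).map ι
  exact (connected_iff_exists_forall_reachable _).2 ⟨u, fun a => (hreach_u a).symm⟩

end SimpleGraph

theorem stmt_11 (G : SimpleGraph V) (hbc : Biconnected G)
    (hnb : ¬ G.Colorable 2) :
    ¬ ∃ M : Set V, IsMIS G M ∧ RobustMIS G M := by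
  rintro ⟨M, hMIS, hrob⟩
  obtain ⟨u, v, huv, huM, hvM⟩ := hMIS.1.exists_adj_of_not_colorable_two hnb
  have hpruned : IsMIS (G.pruneAt v u) M :=
    hrob _ pruneAt_le (pruneAt_connected huv.symm (hbc.2 v))
  obtain ⟨w, hwM, hvw⟩ := hpruned.exists_adj_mem hvM
  exact huM ((pruneAt_adj_left.1 hvw).2 ▸ hwM)
end

section
/- A biconnected graph admits a robust maximal independent set if and only if it is bipartite. -/
open SimpleGraph

variable {V : Type*}

/-
A 2-colouring of `G` is robust through either colour class: in a connected spanning subgraph on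
at least two vertices every vertex has a neighbour, and a vertex of the other class has all its
neighbours in this one. Conversely, if a robust MIS `M` had two adjacent vertices `u, v` outside
it, deleting the edges between `v` and `M` would keep `G` connected, since `G - v` is connected,
yet make `M ∪ {v}` independent; so `M` and its complement are both independent.
-/

theorem isMIS_iff {G : SimpleGraph V} {M : Set V} :
    IsMIS G M ↔ Indep G M ∧ ∀ v ∉ M, ∃ u ∈ M, G.Adj v u := by
  refine ⟨fun ⟨hM, hmax⟩ => ⟨hM, fun v hv => ?_⟩, fun ⟨hM, hdom⟩ => ⟨hM, fun S hS hMS => ?_⟩⟩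
  · by_contra! hnone
    have hins : Indep G (insert v M) := by
      rintro a (rfl | ha) b (rfl | hb) hab
      · exact G.irrefl hab
      · exact hnone b hb hab
      · exact hnone a ha hab.symm
      · exact hM a ha b hb hab
    exact hv (hmax _ hins (Set.subset_insert v M) ▸ Set.mem_insert v M)
  · refine Set.Subset.antisymm (fun v hvS => ?_) hMS
    by_contra hv
    obtain ⟨u, hu, hvu⟩ := hdom v hv
    exact hS v hvS u (hMS hu) hvu

theorem connected_of_induce_ne_connected {G H : SimpleGraph V} {v u : V}
    (hG : (G.induce {x | x ≠ v}).Connected)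
    (hGH : ∀ a b, a ≠ v → b ≠ v → G.Adj a b → H.Adj a b) (hvu : H.Adj v u) : H.Connected := by
  let f : G.induce {x | x ≠ v} →g H := ⟨Subtype.val, fun {a b} hab => hGH a b a.2 b.2 hab⟩
  refine (connected_iff_exists_forall_reachable _).2 ⟨u, fun x => ?_⟩
  by_cases hx : x = v
  · exact hx ▸ hvu.reachable.symm
  · exact (hG.preconnected ⟨u, hvu.ne.symm⟩ ⟨x, hx⟩).map f

namespace Biconnected

variable {G : SimpleGraph V}

theorem exists_ne_ne (hG : Biconnected G) (x y : V) : ∃ z, z ≠ x ∧ z ≠ y := by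
  have : Finite V := Nat.finite_of_card_ne_zero (by have := hG.1; omega)
  refine ENat.exists_ne_ne_of_three_le ?_ x y
  rw [ENat.card_eq_coe_natCard]
  exact_mod_cast hG.1

theorem nontrivial (hG : Biconnected G) : Nontrivial V := by
  obtain ⟨x⟩ := ((Nat.card_pos_iff (α := V)).1 (by have := hG.1; omega)).1
  obtain ⟨y, hyx, -⟩ := hG.exists_ne_ne x x
  exact ⟨y, x, hyx⟩

theorem connected (hG : Biconnected G) : G.Connected := by
  have := hG.nontrivial
  obtain ⟨v⟩ : Nonempty V := inferInstance
  refine (connected_iff_exists_forall_reachable _).2 ⟨v, fun w => ?_⟩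
  obtain ⟨z, hzv, hzw⟩ := hG.exists_ne_ne v w
  exact ((hG.2 z).preconnected ⟨v, hzv.symm⟩ ⟨w, hzw.symm⟩).map (Embedding.induce _).toHom

end Biconnected

theorem RobustMIS.indep_compl {G : SimpleGraph V} {M : Set V}
    (hG : ∀ v, (G.induce {x | x ≠ v}).Connected) (hM : RobustMIS G M) : Indep G Mᶜ := by
  intro u hu v hv huv
  let H := G \ fromRel (fun a b => a = v ∧ b ∈ M)
  have hvu : H.Adj v u := (sdiff_adj _ _ _ _).2 ⟨huv.symm, by simp_all [fromRel_adj]⟩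
  have hH : H.Connected := connected_of_induce_ne_connected (hG v)
    (fun a b ha hb hab => (sdiff_adj _ _ _ _).2 ⟨hab, by simp_all [fromRel_adj]⟩) hvu
  obtain ⟨w, hw, hvw⟩ := (isMIS_iff.1 (hM H sdiff_le hH)).2 v hv
  exact ((sdiff_adj _ _ _ _).1 hvw).2 ((fromRel_adj _ _ _).2 ⟨hvw.ne, Or.inl ⟨rfl, hw⟩⟩)

theorem colorable_two_of_indep_of_indep_compl {G : SimpleGraph V} {M : Set V}
    (hM : Indep G M) (hMc : Indep G Mᶜ) : G.Colorable 2 := by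
  refine IsBipartiteWith.isBipartite (s := M) (t := Mᶜ) ⟨disjoint_compl_right, fun a b hab => ?_⟩
  by_cases ha : a ∈ M <;> by_cases hb : b ∈ M
  · exact (hM a ha b hb hab).elim
  · exact Or.inl ⟨ha, hb⟩
  · exact Or.inr ⟨ha, hb⟩
  · exact (hMc a ha b hb hab).elim

theorem robustMIS_colorClass [Nontrivial V] {G : SimpleGraph V} (c : G.Coloring (Fin 2)) :
    RobustMIS G {x | c x = 0} := by
  intro H hHG hH
  refine isMIS_iff.2 ⟨fun a ha b hb hab => c.valid (hHG hab) (ha.trans hb.symm), fun x hx => ?_⟩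
  obtain ⟨y, hxy⟩ := hH.preconnected.exists_adj_of_nontrivial x
  have hcxy : c x ≠ c y := c.valid (hHG hxy)
  exact ⟨y, by simp only [Set.mem_ofPred_eq] at hx ⊢; omega, hxy⟩

theorem stmt_12 (G : SimpleGraph V) (hbc : Biconnected G) :
    (∃ M : Set V, IsMIS G M ∧ RobustMIS G M) ↔ G.Colorable 2 := by
  constructor
  · rintro ⟨M, hMIS, hrob⟩
    exact colorable_two_of_indep_of_indep_compl hMIS.1 (hrob.indep_compl hbc.2)
  · rintro ⟨c⟩
    have := hbc.nontrivial
    exact ⟨_, robustMIS_colorClass c G le_rfl hbc.connected, robustMIS_colorClass c⟩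
end

section
/- No odd cycle C_{2k+1} (k ≥ 1) admits a robust maximal independent set. -/
open SimpleGraph

variable {V : Type*}

/-!
An independent set of an odd cycle cannot alternate all the way around it (that would be a
proper 2-colouring), so two consecutive vertices `u`, `u + 1` both lie outside it. Deleting the
edge `{u - 1, u}` leaves a connected spanning subgraph in which the only neighbour of `u` is
`u + 1`; there `u` has no neighbour in the set, which is therefore not maximal.
-/

section

variable {G : SimpleGraph V} {M : Set V}

theorem IsMIS.exists_adj_mem_of_notMem (hM : IsMIS G M) {u : V} (hu : u ∉ M) :
    ∃ w ∈ M, G.Adj u w := by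
  by_contra! hfree
  have hindep : Indep G (insert u M) := by
    rintro a (rfl | ha) b (rfl | hb) hab
    · exact hab.ne rfl
    · exact hfree b hb hab
    · exact hfree a ha hab.symm
    · exact hM.1 a ha b hb hab
  exact hu (hM.2 _ hindep (Set.subset_insert u M) ▸ Set.mem_insert u M)

theorem SimpleGraph.colorable_two_of_forall_adj_mem_iff_notMem
    (h : ∀ ⦃u v⦄, G.Adj u v → (u ∈ M ↔ v ∉ M)) : G.Colorable 2 := by
  classical
  refine (Coloring.mk (fun v ↦ decide (v ∈ M)) fun {u v} huv ↦ ?_).colorable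
  simp only [ne_eq, decide_eq_decide]
  have := h huv
  tauto

theorem SimpleGraph.IsHamiltonian.connected_deleteEdges [Fintype V] [DecidableEq V]
    (hG : G.IsHamiltonian) (u v : V) : (G.deleteEdges {s(u, v)}).Connected :=
  hG.connected.connected_delete_edge_of_not_isBridge fun h ↦ h.not_isHamiltonian hG

end

theorem SimpleGraph.cycleGraph_isHamiltonian (n : ℕ) : (cycleGraph (n + 3)).IsHamiltonian :=
  fun _ ↦ ⟨0, cycleGraph.cycle n, Walk.isHamiltonianCycle_iff_isCycle_and_length_eq.mpr
    ⟨cycleGraph.isCycle_cycle, by simp [cycleGraph.length_cycle]⟩⟩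

theorem SimpleGraph.eq_add_one_of_adj_deleteEdges_cycleGraph {n : ℕ} {u w : Fin (n + 2)}
    (h : ((cycleGraph (n + 2)).deleteEdges {s(u - 1, u)}).Adj u w) : w = u + 1 := by
  rw [deleteEdges_adj, cycleGraph_adj, Set.mem_singleton_iff] at h
  obtain ⟨h | h, hne⟩ := h
  · have hw : w = u - 1 := by rw [← h, sub_sub_cancel]
    exact absurd (by rw [hw, Sym2.eq_swap]) hne
  · exact eq_add_of_sub_eq' h

theorem Indep.exists_notMem_notMem_add_one_of_odd {n : ℕ} (hn : Odd (n + 2))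
    {M : Set (Fin (n + 2))} (hM : Indep (cycleGraph (n + 2)) M) :
    ∃ u, u ∉ M ∧ u + 1 ∉ M := by
  by_contra! hcover
  have halternate (v : Fin (n + 2)) : v + 1 ∈ M ↔ v ∉ M :=
    ⟨fun h1 h0 ↦ hM v h0 (v + 1) h1 (cycleGraph_adj.mpr (.inr (add_sub_cancel_left v 1))),
      hcover v⟩
  have hcolorable : (cycleGraph (n + 2)).Colorable 2 := by
    refine colorable_two_of_forall_adj_mem_iff_notMem (M := M) fun u v huv ↦ ?_
    rcases cycleGraph_adj.mp huv with h | h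
    · rw [sub_eq_iff_eq_add'.mp h, halternate]
    · rw [eq_add_of_sub_eq' h, halternate]
      tauto
  have := hcolorable.chromaticNumber_le
  rw [chromaticNumber_cycleGraph_of_odd _ (by omega) hn] at this
  norm_num at this

theorem not_robustMIS_cycleGraph_of_odd {n : ℕ} (hn : Odd (n + 3)) (M : Set (Fin (n + 3))) :
    ¬ RobustMIS (cycleGraph (n + 3)) M := by
  intro hM
  obtain ⟨u, hu, hu1⟩ :=
    (hM _ le_rfl cycleGraph_connected).1.exists_notMem_notMem_add_one_of_odd hn
  have hH := hM _ (deleteEdges_le _) ((cycleGraph_isHamiltonian n).connected_deleteEdges (u - 1) u)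
  obtain ⟨w, hw, huw⟩ := hH.exists_adj_mem_of_notMem hu
  exact hu1 (eq_add_one_of_adj_deleteEdges_cycleGraph huw ▸ hw)

theorem stmt_16 (k : ℕ) (hk : 1 ≤ k) :
    ¬ ∃ M : Set (Fin (2 * k + 1)),
      IsMIS (SimpleGraph.cycleGraph (2 * k + 1)) M ∧
      RobustMIS (SimpleGraph.cycleGraph (2 * k + 1)) M := by
  obtain ⟨n, hn⟩ : ∃ n, 2 * k + 1 = n + 3 := ⟨2 * k - 2, by omega⟩
  rw [hn]
  exact fun ⟨M, _, hM⟩ ↦ not_robustMIS_cycleGraph_of_odd (hn ▸ odd_two_mul_add_one k) M hM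
end
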